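/- With R1, R2, Θ independent, R1 ~ μ_{λ1,c1}, R2 ~ μ_{λ2,c2}, Θ uniform on (0, π), and ρ = √(R1² + R2² − 2·R1·R2·cos Θ), for every r with c2·t < r ≤ (c1 + c2)·t the joint probability P(ρ < r, R1 < c1·t, R2 = c2·t) equals e^{−λ2t}·[1 − exp(−λ1t + (λ1/c1)·√(c1²t² − (r − c2t)²))] + (λ1·e^{−(λ1+λ2)t}/(π·c1)) · ∫_{r−c2t}^{β(r)} arccos((ξ² + (c2t)² − r²)/(2·c2t·ξ)) · ξ·(c1²t² − ξ²)^{−1/2} · exp((λ1/c1)·√(c1²t² − ξ²)) dξ, where β(r) = min{c2t + r, c1t}. -/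

import Mathlib

open MeasureTheory ProbabilityTheory

/-- Density of the absolutely continuous part of the law of the distance from
the origin of a planar Markov random flight with speed `c` and rate `lam` at time `t`. -/
noncomputable def fac (t lam c z : ℝ) : ℝ :=
  if 0 < z ∧ z < c * t then
    (lam / c) * z / Real.sqrt (c ^ 2 * t ^ 2 - z ^ 2) *
      Real.exp (-(lam * t) + (lam / c) * Real.sqrt (c ^ 2 * t ^ 2 - z ^ 2))
  else 0

/-- The law of the distance from the origin of a planar Markov random flight:
singular part `e^{-λt}·δ_{ct}` plus absolutely continuous part with density `fac`. -/
noncomputable def flightLaw (t lam c : ℝ) : Measure ℝ :=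
  ENNReal.ofReal (Real.exp (-(lam * t))) • Measure.dirac (c * t) +
    volume.withDensity fun z => ENNReal.ofReal (fac t lam c z)

/-- The uniform probability measure on a set `s ⊆ ℝ`. -/
noncomputable def uniformMeasure (s : Set ℝ) : Measure ℝ :=
  (volume s)⁻¹ • volume.restrict s

/-- The Euclidean distance between the two flights, expressed through the radii
`R1, R2` and the angle `Θ` via the law of cosines. -/
noncomputable def rho {Ω : Type*} (R1 R2 Θ : Ω → ℝ) (ω : Ω) : ℝ :=
  Real.sqrt (R1 ω ^ 2 + R2 ω ^ 2 - 2 * R1 ω * R2 ω * Real.cos (Θ ω))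

/-!
By independence, the law of `(R1, R2, Θ)` is the product of the three marginal laws. On the event
`R2 = c2 t` only the atom of `R2` contributes, with mass `e^{-λ2 t}`, and the atom `R1 = c1 t` is
excluded. Given `R1 = x ∈ (0, c1 t)`, the law of cosines turns `ρ < r` into
`cos Θ > (x² + b² - r²) / (2 b x)` with `b = c2 t`, an event of probability `arccos (·) / π`.
This probability is `1` for `x ≤ r - b` and `0` for `x ≥ r + b`, so integrating it against the
density of `R1` gives the distribution function of `R1` at `r - b` plus the integral over
`(r - b, min (b + r) (c1 t))`.
-/

open Set Real

section Product

lemma measurableSet_setOf_mem_and_eq {α β γ : Type*} [MeasurableSpace α] [MeasurableSpace β]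
    [MeasurableSpace γ] [MeasurableSingletonClass β] (y : β) {E : Set (α × γ)}
    (hE : MeasurableSet E) : MeasurableSet {p : α × β × γ | (p.1, p.2.2) ∈ E ∧ p.2.1 = y} :=
  (hE.preimage (by fun_prop)).inter ((measurableSet_singleton y).preimage (by fun_prop))

lemma MeasureTheory.Measure.prod_prod_setOf_mem_and_eq {α β γ : Type*} [MeasurableSpace α]
    [MeasurableSpace β] [MeasurableSpace γ] [MeasurableSingletonClass β] (μ : Measure α)
    (ν : Measure β) (κ : Measure γ) [SFinite ν] [SFinite κ] (y : β) {E : Set (α × γ)}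
    (hE : MeasurableSet E) :
    (μ.prod (ν.prod κ)) {p | (p.1, p.2.2) ∈ E ∧ p.2.1 = y}
      = ν {y} * ∫⁻ x, κ (Prod.mk x ⁻¹' E) ∂μ := by
  rw [Measure.prod_apply (measurableSet_setOf_mem_and_eq y hE),
    ← lintegral_const_mul _ (measurable_measure_prodMk_left hE)]
  refine lintegral_congr fun x => ?_
  rw [← Measure.prod_prod]
  congr 1
  ext ⟨y', z⟩
  simp [and_comm]

lemma ProbabilityTheory.iIndepFun.map_prodMk_prodMk {Ω β : Type*} [MeasurableSpace Ω]
    [MeasurableSpace β] {μ : Measure Ω} {X Y Z : Ω → β} (hind : iIndepFun ![X, Y, Z] μ)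
    (hX : Measurable X) (hY : Measurable Y) (hZ : Measurable Z) :
    μ.map (fun ω => (X ω, Y ω, Z ω)) = (μ.map X).prod ((μ.map Y).prod (μ.map Z)) := by
  have := hind.isProbabilityMeasure
  have hYZ : IndepFun Y Z μ := by simpa using hind.indepFun (show (1 : Fin 3) ≠ 2 by decide)
  have hXYZ : IndepFun X (fun ω => (Y ω, Z ω)) μ := by
    simpa using (hind.indepFun_prodMk (fun i => by fin_cases i <;> assumption) 1 2 0
      (by decide) (by decide)).symm
  rw [← (indepFun_iff_map_prod_eq_prod_map_map hY.aemeasurable hZ.aemeasurable).mp hYZ]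
  exact (indepFun_iff_map_prod_eq_prod_map_map hX.aemeasurable
    (hY.prodMk hZ).aemeasurable).mp hXYZ

end Product

section Density

variable {t lam c : ℝ}

lemma fac_nonneg (hl : 0 ≤ lam) (hc : 0 < c) (z : ℝ) : 0 ≤ fac t lam c z := by
  unfold fac
  split_ifs with h
  · have := h.1
    positivity
  · rfl

lemma measurable_fac : Measurable (fac t lam c) :=
  Measurable.ite measurableSet_Ioo (by fun_prop) measurable_const

lemma fac_of_pos_of_le {x : ℝ} (hx0 : 0 < x) (hx : x ≤ c * t) :
    fac t lam c x = lam * exp (-(lam * t)) / c * (x / √(c ^ 2 * t ^ 2 - x ^ 2)) *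
      exp (lam / c * √(c ^ 2 * t ^ 2 - x ^ 2)) := by
  rcases hx.lt_or_eq with hx | rfl
  · rw [fac, if_pos ⟨hx0, hx⟩, exp_add]
    ring
  · rw [fac, if_neg (by simp), show c ^ 2 * t ^ 2 - (c * t) ^ 2 = 0 by ring]
    simp

lemma fac_eq_zero_of_notMem {x : ℝ} (hx : x ∉ Ioo 0 (c * t)) : fac t lam c x = 0 :=
  if_neg hx

noncomputable def facPrimitive (t lam c y : ℝ) : ℝ :=
  -exp (-(lam * t) + lam / c * √(c ^ 2 * t ^ 2 - y ^ 2))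

lemma continuous_facPrimitive : Continuous (facPrimitive t lam c) := by
  unfold facPrimitive
  fun_prop

lemma hasDerivAt_facPrimitive (hc : 0 < c) {x : ℝ} (hx0 : 0 < x) (hx : x < c * t) :
    HasDerivAt (facPrimitive t lam c) (fac t lam c x) x := by
  have hq : 0 < c ^ 2 * t ^ 2 - x ^ 2 := by nlinarith
  have hsq : HasDerivAt (fun y => c ^ 2 * t ^ 2 - y ^ 2) (-(2 * x)) x := by
    simpa using (hasDerivAt_pow 2 x).const_sub (c ^ 2 * t ^ 2)
  refine (((hsq.sqrt hq.ne').const_mul (lam / c)).const_add (-(lam * t))).exp.neg.congr_deriv ?_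
  rw [fac, if_pos ⟨hx0, hx⟩]
  field_simp

lemma integrable_fac (hl : 0 ≤ lam) (hc : 0 < c) : Integrable (fac t lam c) := by
  have hsupp : Function.support (fac t lam c) ⊆ Ioc 0 (c * t) := fun x hx =>
    Ioo_subset_Ioc_self (not_not.mp (mt fac_eq_zero_of_notMem hx))
  refine (integrableOn_iff_integrable_of_support_subset hsupp).mp ?_
  exact intervalIntegral.integrableOn_deriv_of_nonneg continuous_facPrimitive.continuousOn
    (fun x hx => hasDerivAt_facPrimitive hc hx.1 hx.2) (fun x _ => fac_nonneg hl hc x)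

lemma integral_fac (hl : 0 ≤ lam) (hc : 0 < c) {z : ℝ} (hz0 : 0 ≤ z) (hz : z ≤ c * t) :
    ∫ x in (0 : ℝ)..z, fac t lam c x
      = 1 - exp (-(lam * t) + lam / c * √(c ^ 2 * t ^ 2 - z ^ 2)) := by
  rw [intervalIntegral.integral_eq_sub_of_hasDeriv_right_of_le hz0
    continuous_facPrimitive.continuousOn
    (fun x hx => (hasDerivAt_facPrimitive hc hx.1 (hx.2.trans_le hz)).hasDerivWithinAt)
    (integrable_fac hl hc).intervalIntegrable]
  have hsqrt : √(c ^ 2 * t ^ 2 - 0 ^ 2) = c * t := by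
    rw [show c ^ 2 * t ^ 2 - 0 ^ 2 = (c * t) ^ 2 by ring, sqrt_sq (hz0.trans hz)]
  have hexp : -(lam * t) + lam / c * (c * t) = 0 := by
    field_simp
    ring
  simp only [facPrimitive, hsqrt, hexp, exp_zero]
  ring

lemma integral_fac_mul_eq_intervalIntegral (hct : 0 ≤ c * t) (g : ℝ → ℝ) :
    ∫ x, fac t lam c x * g x = ∫ x in (0 : ℝ)..c * t, fac t lam c x * g x := by
  rw [intervalIntegral.integral_of_le hct, integral_Ioc_eq_integral_Ioo,
    setIntegral_eq_integral_of_forall_compl_eq_zero]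
  intro x hx
  rw [fac_eq_zero_of_notMem hx, zero_mul]

end Density

section Angle

lemma lt_cos_iff_lt_arccos {θ u : ℝ} (h0 : 0 ≤ θ) (hπ : θ < π) :
    u < cos θ ↔ θ < arccos u := by
  constructor
  · intro hu
    rcases le_or_gt (-1) u with hu1 | hu1
    · simpa only [arccos_cos h0 hπ.le] using arccos_lt_arccos hu1 hu (cos_le_one θ)
    · rwa [arccos_of_le_neg_one hu1.le]
  · intro hθ
    by_contra! hu
    have := arccos_le_arccos hu
    rw [arccos_cos h0 hπ.le] at this
    linarith

lemma Ioo_inter_setOf_lt_cos (u : ℝ) :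
    Ioo 0 π ∩ {θ | u < cos θ} = Ioo 0 (arccos u) := by
  ext θ
  simp only [mem_inter_iff, mem_Ioo, mem_ofPred_eq]
  constructor
  · rintro ⟨⟨h0, hπ⟩, hu⟩
    exact ⟨h0, (lt_cos_iff_lt_arccos h0.le hπ).mp hu⟩
  · rintro ⟨h0, hθ⟩
    have hπ : θ < π := hθ.trans_le (arccos_le_pi u)
    exact ⟨⟨h0, hπ⟩, (lt_cos_iff_lt_arccos h0.le hπ).mpr hθ⟩

lemma uniformMeasure_setOf_lt_cos (u : ℝ) :
    uniformMeasure (Ioo 0 π) {θ | u < cos θ} = ENNReal.ofReal (arccos u / π) := by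
  rw [uniformMeasure, Measure.smul_apply, smul_eq_mul, Measure.restrict_apply' measurableSet_Ioo,
    inter_comm, Ioo_inter_setOf_lt_cos, volume_Ioo, volume_Ioo, sub_zero, sub_zero,
    ENNReal.ofReal_div_of_pos pi_pos, div_eq_mul_inv, mul_comm]

noncomputable def cosThreshold (b r x : ℝ) : ℝ :=
  (x ^ 2 + b ^ 2 - r ^ 2) / (2 * b * x)

lemma sqrt_lawOfCosines_lt_iff {b r x : ℝ} (hb : 0 < b) (hx : 0 < x) (hr : 0 < r) (θ : ℝ) :
    √(x ^ 2 + b ^ 2 - 2 * x * b * cos θ) < r ↔ cosThreshold b r x < cos θ := by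
  rw [sqrt_lt' hr, cosThreshold, div_lt_iff₀ (by positivity)]
  constructor <;> intro h <;> nlinarith

lemma arccos_cosThreshold_eq_pi {b r x : ℝ} (hb : 0 < b) (hx : 0 < x) (h : x + b ≤ r) :
    arccos (cosThreshold b r x) = π := by
  refine arccos_of_le_neg_one ?_
  rw [cosThreshold, div_le_iff₀ (by positivity)]
  nlinarith

lemma arccos_cosThreshold_eq_zero {b r x : ℝ} (hb : 0 < b) (hr : 0 ≤ r) (h : b + r ≤ x) :
    arccos (cosThreshold b r x) = 0 := by
  refine arccos_of_one_le ?_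
  rw [cosThreshold, le_div_iff₀ (by nlinarith)]
  nlinarith

lemma uniformMeasure_sqrt_lawOfCosines_lt {b r x : ℝ} (hb : 0 < b) (hx : 0 < x) (hr : 0 < r) :
    uniformMeasure (Ioo 0 π) {θ | √(x ^ 2 + b ^ 2 - 2 * x * b * cos θ) < r}
      = ENNReal.ofReal (arccos (cosThreshold b r x) / π) := by
  simp_rw [sqrt_lawOfCosines_lt_iff hb hx hr]
  exact uniformMeasure_setOf_lt_cos _

end Angle

section Integral

variable {t lam c b r : ℝ}

lemma integrable_fac_mul_arccos_cosThreshold (hl : 0 ≤ lam) (hc : 0 < c) :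
    Integrable fun x => fac t lam c x * (arccos (cosThreshold b r x) / π) := by
  refine (integrable_fac hl hc).mul_bdd (c := 1) ?_ (Filter.Eventually.of_forall fun x => ?_)
  · exact ((measurable_arccos.comp (by unfold cosThreshold; fun_prop)).div_const π
      ).aestronglyMeasurable
  · rw [norm_of_nonneg (div_nonneg (arccos_nonneg _) pi_pos.le), div_le_one pi_pos]
    exact arccos_le_pi _

lemma integral_fac_mul_arccos_cosThreshold (hl : 0 ≤ lam) (hc : 0 < c) (hb : 0 < b)
    (hbr : b < r) (hr : r ≤ c * t + b) :
    ∫ x, fac t lam c x * (arccos (cosThreshold b r x) / π)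
      = (1 - exp (-(lam * t) + lam / c * √(c ^ 2 * t ^ 2 - (r - b) ^ 2)))
        + lam * exp (-(lam * t)) / (π * c) *
          ∫ ξ in (r - b)..min (b + r) (c * t), arccos (cosThreshold b r ξ) *
            (ξ / √(c ^ 2 * t ^ 2 - ξ ^ 2)) * exp (lam / c * √(c ^ 2 * t ^ 2 - ξ ^ 2)) := by
  set F := fun x => fac t lam c x * (arccos (cosThreshold b r x) / π)
  set β := min (b + r) (c * t)
  have hrb : 0 < r - b := sub_pos.mpr hbr
  have hrbβ : r - b ≤ β := le_min (by linarith) (by linarith)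
  have hβ : β ≤ c * t := min_le_right _ _
  have hF : ∀ p q : ℝ, IntervalIntegrable F volume p q := fun p q =>
    (integrable_fac_mul_arccos_cosThreshold hl hc).intervalIntegrable
  -- on `[0, r - b]` the whole angle range is favourable, on `[b + r, ∞)` none of it
  have hnear : ∫ x in (0 : ℝ)..r - b, F x = ∫ x in (0 : ℝ)..r - b, fac t lam c x := by
    refine intervalIntegral.integral_congr fun x hx => ?_
    rw [uIcc_of_le hrb.le] at hx
    rcases hx.1.eq_or_lt with rfl | hx0
    · simp [F, fac]
    · simp only [F, arccos_cosThreshold_eq_pi (r := r) hb hx0 (by linarith [hx.2]),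
        div_self pi_ne_zero, mul_one]
  have hfar : ∫ x in β..c * t, F x = 0 := by
    refine intervalIntegral.integral_zero_ae (Filter.Eventually.of_forall fun x hx => ?_)
    rw [uIoc_of_le hβ] at hx
    rcases le_or_gt (b + r) x with hx' | hx'
    · simp only [F, arccos_cosThreshold_eq_zero hb (by linarith) hx', zero_div, mul_zero]
    · have hctx : c * t ≤ x := (min_le_iff.mp hx.1.le).resolve_left hx'.not_ge
      simp only [F, fac_eq_zero_of_notMem fun h => hctx.not_gt h.2, zero_mul]
  have hmid : ∫ x in r - b..β, F x = lam * exp (-(lam * t)) / (π * c) *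
      ∫ ξ in (r - b)..β, arccos (cosThreshold b r ξ) *
        (ξ / √(c ^ 2 * t ^ 2 - ξ ^ 2)) * exp (lam / c * √(c ^ 2 * t ^ 2 - ξ ^ 2)) := by
    rw [← intervalIntegral.integral_const_mul]
    refine intervalIntegral.integral_congr fun x hx => ?_
    rw [uIcc_of_le hrbβ] at hx
    simp only [F, fac_of_pos_of_le (hrb.trans_le hx.1) (hx.2.trans hβ)]
    field_simp
  rw [integral_fac_mul_eq_intervalIntegral (by linarith),
    ← intervalIntegral.integral_add_adjacent_intervals (hF 0 (r - b)) (hF _ _),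
    ← intervalIntegral.integral_add_adjacent_intervals (hF (r - b) β) (hF _ _),
    hnear, hmid, hfar, add_zero, integral_fac hl hc hrb.le (by linarith)]

end Integral

section Measure

instance (t lam c : ℝ) : SFinite (flightLaw t lam c) := by
  unfold flightLaw
  infer_instance

instance (s : Set ℝ) : SFinite (uniformMeasure s) := by
  unfold uniformMeasure
  infer_instance

lemma flightLaw_singleton (t lam c : ℝ) :
    flightLaw t lam c {c * t} = ENNReal.ofReal (exp (-(lam * t))) := by
  rw [flightLaw, Measure.add_apply, Measure.smul_apply, smul_eq_mul,
    Measure.dirac_apply_of_mem (mem_singleton _), withDensity_apply _ (measurableSet_singleton _),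
    setLIntegral_measure_zero _ _ (volume_singleton), mul_one, add_zero]

lemma lintegral_flightLaw (t lam c : ℝ) (f : ℝ → ENNReal) :
    ∫⁻ x, f x ∂flightLaw t lam c
      = ENNReal.ofReal (exp (-(lam * t))) * f (c * t)
        + ∫⁻ x, ENNReal.ofReal (fac t lam c x) * f x := by
  rw [flightLaw, lintegral_add_measure, lintegral_smul_measure, lintegral_dirac,
    lintegral_withDensity_eq_lintegral_mul_non_measurable _ measurable_fac.ennreal_ofReal
      (Filter.Eventually.of_forall fun _ => ENNReal.ofReal_lt_top)]
  rfl

lemma lintegral_flightLaw_uniformMeasure_lawOfCosines {t lam c b r : ℝ} (hl : 0 ≤ lam)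
    (hc : 0 < c) (hb : 0 < b) (hr : 0 < r) :
    ∫⁻ x, uniformMeasure (Ioo 0 π)
        {θ | √(x ^ 2 + b ^ 2 - 2 * x * b * cos θ) < r ∧ x < c * t} ∂flightLaw t lam c
      = ENNReal.ofReal (∫ x, fac t lam c x * (arccos (cosThreshold b r x) / π)) := by
  have hpoint : ∀ x, ENNReal.ofReal (fac t lam c x) *
      uniformMeasure (Ioo 0 π) {θ | √(x ^ 2 + b ^ 2 - 2 * x * b * cos θ) < r ∧ x < c * t}
        = ENNReal.ofReal (fac t lam c x * (arccos (cosThreshold b r x) / π)) := by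
    intro x
    by_cases hx : x ∈ Ioo 0 (c * t)
    · simp only [hx.2, and_true, uniformMeasure_sqrt_lawOfCosines_lt hb hx.1 hr]
      rw [ENNReal.ofReal_mul (fac_nonneg hl hc x)]
    · simp only [fac_eq_zero_of_notMem hx, ENNReal.ofReal_zero, zero_mul]
  rw [lintegral_flightLaw, ofReal_integral_eq_lintegral_ofReal
    (integrable_fac_mul_arccos_cosThreshold hl hc)
    (Filter.Eventually.of_forall fun x => mul_nonneg (fac_nonneg hl hc x)
      (div_nonneg (arccos_nonneg _) pi_pos.le))]
  simp only [lt_irrefl, and_false, ofPred_false, measure_empty, mul_zero, zero_add, hpoint]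

end Measure

theorem joint_prob_first_switched_large_r_general {Ω : Type*} [MeasureSpace Ω]
    (t l1 l2 c1 c2 : ℝ) (ht : 0 < t) (hl1 : 0 < l1)
    (hc2 : 0 < c2)
    (R1 R2 Θ : Ω → ℝ) (hmR1 : Measurable R1) (hmR2 : Measurable R2) (hmΘ : Measurable Θ)
    (hind : iIndepFun ![R1, R2, Θ] ℙ)
    (hR1 : Measure.map R1 ℙ = flightLaw t l1 c1)
    (hR2 : Measure.map R2 ℙ = flightLaw t l2 c2)
    (hΘ : Measure.map Θ ℙ = uniformMeasure (Set.Ioo 0 Real.pi))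
    (r : ℝ) (hr0 : c2 * t < r) (hr : r ≤ (c1 + c2) * t) :
    ℙ {ω | rho R1 R2 Θ ω < r ∧ R1 ω < c1 * t ∧ R2 ω = c2 * t}
      = ENNReal.ofReal
          (Real.exp (-(l2 * t)) *
              (1 - Real.exp (-(l1 * t) +
                (l1 / c1) * Real.sqrt (c1 ^ 2 * t ^ 2 - (r - c2 * t) ^ 2)))
            + l1 * Real.exp (-((l1 + l2) * t)) / (Real.pi * c1) *
              (∫ ξ in (r - c2 * t)..(min (c2 * t + r) (c1 * t)),
              Real.arccos ((ξ ^ 2 + (c2 * t) ^ 2 - r ^ 2) / (2 * (c2 * t) * ξ)) *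
                (ξ / Real.sqrt (c1 ^ 2 * t ^ 2 - ξ ^ 2)) *
                Real.exp ((l1 / c1) * Real.sqrt (c1 ^ 2 * t ^ 2 - ξ ^ 2)))) := by
  have hb : 0 < c2 * t := mul_pos hc2 ht
  have hc1 : 0 < c1 := pos_of_mul_pos_left (by linarith : 0 < c1 * t) ht.le
  set E : Set (ℝ × ℝ) := {q | √(q.1 ^ 2 + (c2 * t) ^ 2 - 2 * q.1 * (c2 * t) * cos q.2) < r ∧
    q.1 < c1 * t}
  have hE : MeasurableSet E := by measurability
  have hevent : {ω | rho R1 R2 Θ ω < r ∧ R1 ω < c1 * t ∧ R2 ω = c2 * t}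
      = (fun ω => (R1 ω, R2 ω, Θ ω)) ⁻¹' {p | (p.1, p.2.2) ∈ E ∧ p.2.1 = c2 * t} := by
    ext ω
    simp only [rho, E, mem_ofPred_eq, mem_preimage]
    constructor
    · rintro ⟨hρ, h1, h2⟩
      exact ⟨⟨h2 ▸ hρ, h1⟩, h2⟩
    · rintro ⟨⟨hρ, h1⟩, h2⟩
      exact ⟨h2 ▸ hρ, h1, h2⟩
  rw [hevent, ← Measure.map_apply (hmR1.prodMk (hmR2.prodMk hmΘ))
      (measurableSet_setOf_mem_and_eq _ hE),
    hind.map_prodMk_prodMk hmR1 hmR2 hmΘ, hR1, hR2, hΘ,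
    Measure.prod_prod_setOf_mem_and_eq _ _ _ _ hE, flightLaw_singleton]
  simp only [E, preimage_ofPred_eq]
  rw [lintegral_flightLaw_uniformMeasure_lawOfCosines hl1.le hc1 hb (hb.trans hr0),
    integral_fac_mul_arccos_cosThreshold hl1.le hc1 hb hr0 (by linarith),
    ← ENNReal.ofReal_mul (exp_nonneg _)]
  congr 1
  rw [show -((l1 + l2) * t) = -(l2 * t) + -(l1 * t) by ring, exp_add (-(l2 * t))]
  simp only [cosThreshold]
  ring

theorem joint_prob_first_switched_large_r {Ω : Type*} [MeasureSpace Ω] [IsProbabilityMeasure (ℙ : Measure Ω)]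
    (t l1 l2 c1 c2 : ℝ) (ht : 0 < t) (hl1 : 0 < l1) (hl2 : 0 < l2)
    (hc2 : 0 < c2) (hc12 : c2 ≤ c1)
    (R1 R2 Θ : Ω → ℝ) (hmR1 : Measurable R1) (hmR2 : Measurable R2) (hmΘ : Measurable Θ)
    (hind : iIndepFun ![R1, R2, Θ] ℙ)
    (hR1 : Measure.map R1 ℙ = flightLaw t l1 c1)
    (hR2 : Measure.map R2 ℙ = flightLaw t l2 c2)
    (hΘ : Measure.map Θ ℙ = uniformMeasure (Set.Ioo 0 Real.pi))
    (r : ℝ) (hr0 : c2 * t < r) (hr : r ≤ (c1 + c2) * t) :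
    ℙ {ω | rho R1 R2 Θ ω < r ∧ R1 ω < c1 * t ∧ R2 ω = c2 * t}
      = ENNReal.ofReal
          (Real.exp (-(l2 * t)) *
              (1 - Real.exp (-(l1 * t) +
                (l1 / c1) * Real.sqrt (c1 ^ 2 * t ^ 2 - (r - c2 * t) ^ 2)))
            + l1 * Real.exp (-((l1 + l2) * t)) / (Real.pi * c1) *
              (∫ ξ in (r - c2 * t)..(min (c2 * t + r) (c1 * t)),
              Real.arccos ((ξ ^ 2 + (c2 * t) ^ 2 - r ^ 2) / (2 * (c2 * t) * ξ)) *
                (ξ / Real.sqrt (c1 ^ 2 * t ^ 2 - ξ ^ 2)) *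
                Real.exp ((l1 / c1) * Real.sqrt (c1 ^ 2 * t ^ 2 - ξ ^ 2)))) :=
  joint_prob_first_switched_large_r_general t l1 l2 c1 c2 ht hl1 hc2 R1 R2 Θ hmR1 hmR2 hmΘ hind hR1
    hR2 hΘ r hr0 hr
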